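/- arXiv:2510.22311 — 2 statements merged into one kernel-verified Lean document; each statement's English description precedes it below -/
import Mathlib

section
/- Let 0 < α < 1 and let c : ℕ → ℝ be such that the squared sequence is nonincreasing ((c (i+1))² ≤ (c i)² for all i), Σ'_i ((c i)²)^α < ∞ (summable), and Σ'_i (c i)² < ∞ (summable). For a natural number K ≥ 1 define the tail Δ(K) = Σ'_{i : ℕ} (c (K + i))², and assume Δ(K) > 0. Then log(Δ(K)) ≤ ((1−α)/α) · (S^α(c) − log K) + log(α/(1−α)). -/
/-- Operator Stabilizer Rényi entropy of a (countable) family of real Pauli coefficients. -/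
noncomputable def OSE (α : ℝ) (c : ℕ → ℝ) : ℝ :=
  (1 / (1 - α)) * Real.log (∑' i, ((c i) ^ 2) ^ α)

/-- Entropy bound on the Top-`K` truncation tail:
`log Δ(K) ≤ ((1-α)/α) (Sᵅ(c) - log K) + log (α/(1-α))`. -/
theorem log_tail_le_entropy (α : ℝ) (hα0 : 0 < α) (hα1 : α < 1)
    (c : ℕ → ℝ) (hmono : ∀ i, (c (i + 1)) ^ 2 ≤ (c i) ^ 2)
    (hsumα : Summable fun i => ((c i) ^ 2) ^ α)
    (hsum : Summable fun i => (c i) ^ 2)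
    (K : ℕ) (hK : 1 ≤ K) (hΔ : 0 < ∑' i, (c (K + i)) ^ 2) :
    Real.log (∑' i, (c (K + i)) ^ 2) ≤
      ((1 - α) / α) * (OSE α c - Real.log K) + Real.log (α / (1 - α)) := by
  have hα1' : 0 < 1 - α := by linarith
  set a : ℕ → ℝ := fun i => (c i) ^ 2 with ha
  have ha0 : ∀ i, 0 ≤ a i := fun i => sq_nonneg _
  have hanti : Antitone a := antitone_nat_of_succ_le hmono
  set A : ℝ := ∑' i, (a i) ^ α with hA
  have hAnn : 0 ≤ A := tsum_nonneg fun i => Real.rpow_nonneg (ha0 i) α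
  set p : ℝ := -(1/α) with hp
  have hplt : p < -1 := by
    rw [hp, neg_lt_neg_iff]
    exact one_lt_one_div hα0 hα1
  have hKpos : (0:ℝ) < K := by exact_mod_cast hK
  have hK1 : (1:ℝ) ≤ K := by exact_mod_cast hK
  -- key pointwise bound
  have hkey : ∀ i : ℕ, ((i : ℝ) + 1) * (a i) ^ α ≤ A := by
    intro i
    calc ((i:ℝ)+1) * (a i)^α = ∑ _j ∈ Finset.range (i+1), (a i)^α := by
          rw [Finset.sum_const, Finset.card_range, nsmul_eq_mul]; push_cast; ring
      _ ≤ ∑ j ∈ Finset.range (i+1), (a j)^α := by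
          apply Finset.sum_le_sum
          intro j hj
          exact Real.rpow_le_rpow (ha0 i)
            (hanti (Nat.le_of_lt_succ (Finset.mem_range.mp hj))) hα0.le
      _ ≤ A := Summable.sum_le_tsum _ (fun j _ => Real.rpow_nonneg (ha0 j) α) hsumα
  have hbound : ∀ i : ℕ, a i ≤ A ^ (1/α) * ((i:ℝ)+1) ^ p := by
    intro i
    have hip : (0:ℝ) < (i:ℝ)+1 := by positivity
    have hdiv : (a i)^α ≤ A / ((i:ℝ)+1) := by
      rw [le_div_iff₀ hip]
      linarith [hkey i]
    have h2 : ((a i)^α)^(1/α) ≤ (A / ((i:ℝ)+1)) ^ (1/α) :=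
      Real.rpow_le_rpow (Real.rpow_nonneg (ha0 i) α) hdiv (by positivity)
    have h3 : ((a i)^α)^(1/α) = a i := by
      rw [← Real.rpow_mul (ha0 i), mul_one_div_cancel hα0.ne', Real.rpow_one]
    have h4 : (A / ((i:ℝ)+1)) ^ (1/α) = A ^ (1/α) * ((i:ℝ)+1) ^ p := by
      rw [Real.div_rpow hAnn hip.le, hp, Real.rpow_neg hip.le, div_eq_mul_inv]
    rw [h3, h4] at h2
    exact h2
  -- summability of tail and of bound
  have htail : Summable (fun i => a (K + i)) := hsum.comp_injective (add_right_injective K)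
  have hgsum0 : Summable (fun i : ℕ => ((K:ℝ)+(i:ℝ)+1) ^ p) := by
    have h0 : Summable (fun n : ℕ => ((n:ℝ)) ^ p) := Real.summable_nat_rpow.mpr hplt
    have h1 := (summable_nat_add_iff (K+1)).mpr h0
    apply h1.congr
    intro n
    congr 1
    push_cast
    ring
  have hgsum : Summable (fun i : ℕ => A ^ (1/α) * ((K:ℝ)+(i:ℝ)+1) ^ p) :=
    hgsum0.mul_left _
  -- Δ ≤ A^{1/α} * tail of p-series
  have hΔle : (∑' i, a (K + i)) ≤ ∑' i : ℕ, A ^ (1/α) * ((K:ℝ)+(i:ℝ)+1) ^ p := by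
    apply Summable.tsum_le_tsum _ htail hgsum
    intro i
    have := hbound (K + i)
    convert this using 3
    · rfl
    push_cast
    ring
  -- integral comparison for the p-series tail
  have hTbnd : (∑' i : ℕ, ((K:ℝ)+(i:ℝ)+1) ^ p) ≤ (K:ℝ) ^ (p+1) / (-(p+1)) := by
    apply Real.tsum_le_of_sum_range_le (fun n => Real.rpow_nonneg (by positivity) _)
    intro n
    have hanti' : AntitoneOn (fun x : ℝ => x ^ p) (Set.Icc (K:ℝ) ((K:ℝ) + n)) := by
      intro x hx y hy hxy
      exact Real.rpow_le_rpow_of_nonpos (lt_of_lt_of_le hKpos hx.1) hxy (by linarith [hplt])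
    have hint := hanti'.sum_le_integral
    have heq : ∀ i ∈ Finset.range n, ((K:ℝ)+(i:ℝ)+1) ^ p = (fun x : ℝ => x ^ p) ((K:ℝ) + ((i:ℕ)+1 : ℕ)) := by
      intro i _
      push_cast
      ring_nf
    rw [Finset.sum_congr rfl heq]
    refine le_trans hint ?_
    have hne : (0:ℝ) ∉ Set.uIcc (K:ℝ) ((K:ℝ)+n) := by
      rw [Set.uIcc_of_le (le_add_of_nonneg_right (Nat.cast_nonneg n))]
      intro h
      exact absurd h.1 (not_le.mpr hKpos)
    rw [integral_rpow (Or.inr ⟨by linarith [hplt], hne⟩)]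
    have hKn : (0:ℝ) ≤ ((K:ℝ)+n) ^ (p+1) := Real.rpow_nonneg (by positivity) _
    have hp1 : p + 1 < 0 := by linarith
    have hrw : (((K:ℝ)+n)^(p+1) - (K:ℝ)^(p+1))/(p+1)
        = ((K:ℝ)^(p+1) - ((K:ℝ)+n)^(p+1))/(-(p+1)) := by
      rw [div_neg, ← neg_div, neg_sub]
    rw [hrw]
    apply (div_le_div_iff_of_pos_right (by linarith : (0:ℝ) < -(p+1))).mpr
    linarith
  -- assemble
  have hCpos : (0:ℝ) < (K:ℝ)^(p+1) / (-(p+1)) :=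
    div_pos (Real.rpow_pos_of_pos hKpos _) (by linarith)
  have hfinal : (∑' i, a (K + i)) ≤ A ^ (1/α) * ((K:ℝ)^(p+1) / (-(p+1))) := by
    calc (∑' i, a (K + i)) ≤ ∑' i : ℕ, A ^ (1/α) * ((K:ℝ)+(i:ℝ)+1) ^ p := hΔle
      _ = A ^ (1/α) * ∑' i : ℕ, ((K:ℝ)+(i:ℝ)+1) ^ p := tsum_mul_left
      _ ≤ A ^ (1/α) * ((K:ℝ)^(p+1) / (-(p+1))) :=
          mul_le_mul_of_nonneg_left hTbnd (Real.rpow_nonneg hAnn _)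
  have hΔ' : 0 < ∑' i, a (K+i) := hΔ
  have hApos : 0 < A := by
    rcases hAnn.lt_or_eq with h | h
    · exact h
    · exfalso
      rw [← h, Real.zero_rpow (one_div_ne_zero hα0.ne'), zero_mul] at hfinal
      linarith
  have hOSE : OSE α c = (1/(1-α)) * Real.log A := rfl
  have h6 : p + 1 = -((1-α)/α) := by rw [hp]; field_simp; ring
  have h7 : -(p+1) = (1-α)/α := by rw [h6, neg_neg]
  have h8 : Real.log (α/(1-α)) = -Real.log ((1-α)/α) := by
    rw [← Real.log_inv, inv_div]
  calc Real.log (∑' i, (c (K+i))^2) ≤ Real.log (A ^ (1/α) * ((K:ℝ)^(p+1) / (-(p+1)))) :=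
        Real.log_le_log hΔ' hfinal
    _ = (1/α) * Real.log A + ((p+1) * Real.log K - Real.log (-(p+1))) := by
        rw [Real.log_mul (ne_of_gt (Real.rpow_pos_of_pos hApos _)) (ne_of_gt hCpos),
            Real.log_rpow hApos,
            Real.log_div (ne_of_gt (Real.rpow_pos_of_pos hKpos _)) (by linarith),
            Real.log_rpow hKpos]
    _ = ((1 - α) / α) * (OSE α c - Real.log K) + Real.log (α / (1 - α)) := by
        rw [hOSE, h6, neg_neg, h8]
        field_simp
        ring
end

section
/- Let 0 < α < 1, ε > 0, and let c : ℕ → ℝ be such that the squared sequence is nonincreasing ((c (i+1))² ≤ (c i)² for all i), Σ'_i ((c i)²)^α < ∞ (summable), and Σ'_i (c i)² < ∞ (summable). If the natural number K ≥ 1 satisfies K ≥ exp(S^α(c)) · (2α/((1−α)·ε²))^{α/(1−α)}, then 2 · Σ'_{i : ℕ} (c (K + i))² ≤ ε². In other words, retaining the K largest Pauli coefficients with K at least exp(S^α(c)) · (2α/((1−α)ε²))^{α/(1−α)} guarantees truncation error √(2Δ(K)) ≤ ε. -/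
/-!
Because `cᵢ²` is nonincreasing, `(i + 1) (cᵢ²)^α ≤ A := Σ (cⱼ²)^α`, so
`cᵢ² ≤ A^{1/α} (i + 1)^{-1/α}`.
Comparing the tail of this `p`-series (`p = 1/α > 1`) with `∫_K^∞ t^{-1/α} dt` gives
`Δ(K) ≤ A^{1/α} · α/(1-α) · K^{-(1-α)/α}`, and the hypothesis on `K`, raised to the power
`(1-α)/α`, says exactly that this is at most `ε²/2`. Here `A^{1/(1-α)} ≤ exp Sᵅ(c)`, with
equality unless `A = 0` (where `log 0 = 0` makes `exp Sᵅ(c) = 1`).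
-/

open Real Finset Set

theorem Antitone.succ_mul_le_tsum {f : ℕ → ℝ} (hf : Antitone f) (hf0 : ∀ i, 0 ≤ f i)
    (hs : Summable f) (n : ℕ) : ((n : ℝ) + 1) * f n ≤ ∑' i, f i :=
  calc ((n : ℝ) + 1) * f n = ∑ _i ∈ range (n + 1), f n := by simp
    _ ≤ ∑ i ∈ range (n + 1), f i :=
      sum_le_sum fun i hi => hf (Nat.lt_succ_iff.1 (mem_range.1 hi))
    _ ≤ ∑' i, f i := hs.sum_le_tsum _ fun i _ => hf0 i

theorem Antitone.le_tsum_rpow_mul_rpow_neg {α : ℝ} (hα : 0 < α) {f : ℕ → ℝ} (hf : Antitone f)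
    (hf0 : ∀ i, 0 ≤ f i) (hs : Summable fun i => f i ^ α) (n : ℕ) :
    f n ≤ (∑' i, f i ^ α) ^ α⁻¹ * ((n : ℝ) + 1) ^ (-α⁻¹) := by
  have hn : (0 : ℝ) < n + 1 := by positivity
  have hmul : ((n : ℝ) + 1) * f n ^ α ≤ ∑' i, f i ^ α :=
    Antitone.succ_mul_le_tsum (fun _ j hij => rpow_le_rpow (hf0 j) (hf hij) hα.le)
      (fun i => rpow_nonneg (hf0 i) α) hs n
  calc f n = (f n ^ α) ^ α⁻¹ := (rpow_rpow_inv (hf0 n) hα.ne').symm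
    _ ≤ ((∑' i, f i ^ α) / ((n : ℝ) + 1)) ^ α⁻¹ :=
      rpow_le_rpow (rpow_nonneg (hf0 n) α) ((le_div_iff₀' hn).2 hmul) (inv_nonneg.2 hα.le)
    _ = (∑' i, f i ^ α) ^ α⁻¹ * ((n : ℝ) + 1) ^ (-α⁻¹) := by
      rw [div_rpow (tsum_nonneg fun i => rpow_nonneg (hf0 i) α) hn.le, rpow_neg hn.le,
        div_eq_mul_inv]

theorem summable_rpow_neg_nat_add {p : ℝ} (hp : 1 < p) (K : ℕ) :
    Summable fun n : ℕ => ((n + K + 1 : ℕ) : ℝ) ^ (-p) :=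
  (summable_nat_add_iff (K + 1)).2 ((summable_nat_rpow (p := -p)).2 (by linarith)) |>.congr
    fun n => by rw [add_assoc]

theorem tsum_rpow_neg_nat_add_le {p : ℝ} (hp : 1 < p) {K : ℕ} (hK : 0 < K) :
    ∑' n : ℕ, ((n + K + 1 : ℕ) : ℝ) ^ (-p) ≤ (K : ℝ) ^ (1 - p) / (p - 1) := by
  have hK' : (0 : ℝ) < K := by exact_mod_cast hK
  calc ∑' n : ℕ, ((n + K + 1 : ℕ) : ℝ) ^ (-p) ≤ ∫ t in Ioi (K : ℝ), t ^ (-p) :=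
        ((antitoneOn_rpow_Ioi_of_exponent_nonpos (by linarith)).mono
          fun t ht => hK'.trans_le ht).tsum_comp_add_le_integral K
          (integrableOn_Ioi_rpow_of_lt (by linarith) hK')
          fun t ht => rpow_nonneg (hK'.le.trans ht.le) _
    _ = (K : ℝ) ^ (1 - p) / (p - 1) := by
      rw [integral_Ioi_rpow_of_lt (by linarith) hK', neg_add_eq_sub, ← neg_div_neg_eq, neg_neg,
        neg_sub]

theorem Antitone.tsum_nat_add_le {α : ℝ} (hα0 : 0 < α) (hα1 : α < 1) {f : ℕ → ℝ}
    (hf : Antitone f) (hf0 : ∀ i, 0 ≤ f i) (hs : Summable fun i => f i ^ α) {K : ℕ}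
    (hK : 0 < K) :
    ∑' i, f (K + i) ≤ (∑' i, f i ^ α) ^ α⁻¹ * ((K : ℝ) ^ (1 - α⁻¹) / (α⁻¹ - 1)) := by
  set A := ∑' i, f i ^ α
  have hp : 1 < α⁻¹ := (one_lt_inv₀ hα0).2 hα1
  have hle : ∀ i, f (K + i) ≤ A ^ α⁻¹ * ((i + K + 1 : ℕ) : ℝ) ^ (-α⁻¹) := fun i => by
    simpa [add_comm i K] using hf.le_tsum_rpow_mul_rpow_neg hα0 hf0 hs (K + i)
  have hmaj := (summable_rpow_neg_nat_add hp K).mul_left (A ^ α⁻¹)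
  calc ∑' i, f (K + i) ≤ ∑' i, A ^ α⁻¹ * ((i + K + 1 : ℕ) : ℝ) ^ (-α⁻¹) :=
        (hmaj.of_nonneg_of_le (fun i => hf0 _) hle).tsum_le_tsum hle hmaj
    _ ≤ A ^ α⁻¹ * ((K : ℝ) ^ (1 - α⁻¹) / (α⁻¹ - 1)) := by
      rw [tsum_mul_left]
      exact mul_le_mul_of_nonneg_left (tsum_rpow_neg_nat_add_le hp hK)
        (rpow_nonneg (tsum_nonneg fun i => rpow_nonneg (hf0 i) α) _)

theorem rpow_le_exp_OSE (α : ℝ) (c : ℕ → ℝ) :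
    (∑' i, ((c i) ^ 2) ^ α) ^ (1 / (1 - α)) ≤ exp (OSE α c) := by
  rcases (tsum_nonneg fun i => rpow_nonneg (sq_nonneg (c i)) α).eq_or_lt with h0 | hpos
  · rw [← h0, OSE, ← h0, log_zero, mul_zero, exp_zero]
    exact zero_rpow_le_one _
  · rw [OSE, rpow_def_of_pos hpos, mul_comm]

theorem mul_le_rpow_of_rpow_mul_rpow_le {α A B K : ℝ} (hα0 : 0 < α) (hα1 : α < 1) (hA : 0 ≤ A)
    (hB : 0 ≤ B) (h : A ^ (1 / (1 - α)) * B ^ (α / (1 - α)) ≤ K) :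
    A ^ α⁻¹ * B ≤ K ^ (α⁻¹ - 1) := by
  have h1α : 1 - α ≠ 0 := by linarith
  have hr : 0 ≤ α⁻¹ - 1 := by linarith [(one_lt_inv₀ hα0).2 hα1]
  calc A ^ α⁻¹ * B = (A ^ (1 / (1 - α)) * B ^ (α / (1 - α))) ^ (α⁻¹ - 1) := by
        have hA_exp : 1 / (1 - α) * (α⁻¹ - 1) = α⁻¹ := by field_simp
        have hB_exp : α / (1 - α) * (α⁻¹ - 1) = 1 := by field_simp
        rw [mul_rpow (by positivity) (by positivity), ← rpow_mul hA, ← rpow_mul hB, hA_exp,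
          hB_exp, rpow_one]
    _ ≤ K ^ (α⁻¹ - 1) := rpow_le_rpow (by positivity) h hr

theorem topK_budget_from_entropy_general (α : ℝ) (hα0 : 0 < α) (hα1 : α < 1)
    (ε : ℝ) (hε : 0 < ε)
    (c : ℕ → ℝ) (hmono : ∀ i, (c (i + 1)) ^ 2 ≤ (c i) ^ 2)
    (hsumα : Summable fun i => ((c i) ^ 2) ^ α)
    (K : ℕ)
    (hK : Real.exp (OSE α c) * (2 * α / ((1 - α) * ε ^ 2)) ^ (α / (1 - α)) ≤ (K : ℝ)) :
    2 * (∑' i, (c (K + i)) ^ 2) ≤ ε ^ 2 := by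
  set A := ∑' i, ((c i) ^ 2) ^ α
  have h1α : 0 < 1 - α := by linarith
  have hB : 0 < 2 * α / ((1 - α) * ε ^ 2) := by positivity
  have hKpos : 0 < K := by exact_mod_cast (by positivity : (0 : ℝ) < _).trans_le hK
  have hK' : 0 < (K : ℝ) := by exact_mod_cast hKpos
  have hbudget : A ^ α⁻¹ * (2 * α / ((1 - α) * ε ^ 2)) ≤ (K : ℝ) ^ (α⁻¹ - 1) :=
    mul_le_rpow_of_rpow_mul_rpow_le hα0 hα1 (tsum_nonneg fun i => rpow_nonneg (sq_nonneg _) α)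
      hB.le ((mul_le_mul_of_nonneg_right (rpow_le_exp_OSE α c) (by positivity)).trans hK)
  rw [mul_div_assoc', div_le_iff₀ (by positivity)] at hbudget
  calc 2 * ∑' i, (c (K + i)) ^ 2 ≤ 2 * (A ^ α⁻¹ * ((K : ℝ) ^ (1 - α⁻¹) / (α⁻¹ - 1))) := by
        gcongr
        exact (antitone_nat_of_succ_le hmono).tsum_nat_add_le hα0 hα1 (fun i => sq_nonneg _)
          hsumα hKpos
    _ = A ^ α⁻¹ * (2 * α) / ((K : ℝ) ^ (α⁻¹ - 1) * (1 - α)) := by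
        rw [show 1 - α⁻¹ = -(α⁻¹ - 1) by ring, rpow_neg hK'.le]
        field_simp
    _ ≤ ε ^ 2 := by
        rw [div_le_iff₀ (by positivity)]
        linarith

/-- Resource prescription: if `K ≥ exp(Sᵅ(c)) · (2α/((1-α)ε²))^{α/(1-α)}`, then the
Top-`K` truncation tail satisfies `2 Δ(K) ≤ ε²`. -/
theorem topK_budget_from_entropy (α : ℝ) (hα0 : 0 < α) (hα1 : α < 1)
    (ε : ℝ) (hε : 0 < ε)
    (c : ℕ → ℝ) (hmono : ∀ i, (c (i + 1)) ^ 2 ≤ (c i) ^ 2)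
    (hsumα : Summable fun i => ((c i) ^ 2) ^ α)
    (hsum : Summable fun i => (c i) ^ 2)
    (K : ℕ) (hK1 : 1 ≤ K)
    (hK : Real.exp (OSE α c) * (2 * α / ((1 - α) * ε ^ 2)) ^ (α / (1 - α)) ≤ (K : ℝ)) :
    2 * (∑' i, (c (K + i)) ^ 2) ≤ ε ^ 2 :=
  topK_budget_from_entropy_general α hα0 hα1 ε hε c hmono hsumα K hK
end
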